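/- If T is an N×N matrix over F and n₀ ≥ 1 is such that T_{i+1,j} = T_{i,j-1} whenever i + j ≥ n₀ (with T_{i,0} = 0), then T = T₀ + Σ_{k∈Z} α_k c^{(k)}, where T₀ is finitary, c^{(k)} = Σ_{j−i=k} e_{ij}, and α_k ∈ F; i.e., T is an almost Toeplitz matrix. -/
import Mathlib


/-- A matrix `T` over `F` (indexed here by `ℕ` starting from `0`; the paper's
entry `T_{i,j}`, `i,j ≥ 1`, is `T (i-1) (j-1)`, and the paper's convention
`T_{i,0} = 0` becomes the second hypothesis) which satisfies
`T_{i+1,j} = T_{i,j-1}` whenever `i + j ≥ n₀` is almost Toeplitz: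
`T = T₀ + Σ_{k ∈ ℤ} α_k c^{(k)}` with `T₀` finitary, where `c^{(k)}` has `1`
at all entries `(i,j)` with `j − i = k`, so the sum contributes `α (j - i)`
at the entry `(i,j)`. -/
theorem eventually_diagonal_const_almost_toeplitz (F : Type*) [Field F]
    (T : ℕ → ℕ → F) (n₀ : ℕ) (hn₀ : 1 ≤ n₀)
    (h1 : ∀ a b : ℕ, n₀ ≤ a + b + 3 → T (a + 1) (b + 1) = T a b)
    (h2 : ∀ a : ℕ, n₀ ≤ a + 2 → T (a + 1) 0 = 0) :
    ∃ (T₀ : ℕ → ℕ → F) (α : ℤ → F),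
      {p : ℕ × ℕ | T₀ p.1 p.2 ≠ 0}.Finite ∧
        ∀ i j : ℕ, T i j = T₀ i j + α ((j : ℤ) - (i : ℤ)) := by
  set α : ℤ → F := fun k => T (n₀ + (-k).toNat) (n₀ + k.toNat) with hα
  -- shift lemma
  have shift : ∀ m i j : ℕ, n₀ ≤ i + j + 3 → T (i + m) (j + m) = T i j := by
    intro m
    induction m with
    | zero => intro i j _; rfl
    | succ m ih =>
      intro i j h
      have : T (i + m + 1) (j + m + 1) = T (i + m) (j + m) := h1 _ _ (by omega)
      calc T (i + (m+1)) (j + (m+1)) = T (i + m + 1) (j + m + 1) := by ring_nf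
        _ = T (i + m) (j + m) := this
        _ = T i j := ih i j h
  have hmain : ∀ i j : ℕ, n₀ ≤ i + j + 3 → T i j = α ((j : ℤ) - (i : ℤ)) := by
    intro i j h
    rcases le_total i j with hij | hij
    · have h1' : (-((j : ℤ) - (i : ℤ))).toNat = 0 := by omega
      have h2' : ((j : ℤ) - (i : ℤ)).toNat = j - i := by omega
      rw [hα]; simp only [h1', h2', Nat.add_zero]
      rcases le_total i n₀ with hin | hin
      · have := shift (n₀ - i) i j h
        have e1 : i + (n₀ - i) = n₀ := by omega
        have e2 : j + (n₀ - i) = n₀ + (j - i) := by omega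
        rw [e1, e2] at this
        exact this.symm
      · have := shift (i - n₀) n₀ (n₀ + (j - i)) (by omega)
        have e1 : n₀ + (i - n₀) = i := by omega
        have e2 : n₀ + (j - i) + (i - n₀) = j := by omega
        rw [e1, e2] at this
        exact this
    · have h1' : (-((j : ℤ) - (i : ℤ))).toNat = i - j := by omega
      have h2' : ((j : ℤ) - (i : ℤ)).toNat = 0 := by omega
      rw [hα]; simp only [h1', h2', Nat.add_zero]
      rcases le_total j n₀ with hin | hin
      · have := shift (n₀ - j) i j h
        have e1 : i + (n₀ - j) = n₀ + (i - j) := by omega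
        have e2 : j + (n₀ - j) = n₀ := by omega
        rw [e1, e2] at this
        exact this.symm
      · have := shift (j - n₀) (n₀ + (i - j)) n₀ (by omega)
        have e1 : n₀ + (i - j) + (j - n₀) = i := by omega
        have e2 : n₀ + (j - n₀) = j := by omega
        rw [e1, e2] at this
        exact this
  refine ⟨fun i j => T i j - α ((j : ℤ) - (i : ℤ)), α, ?_, ?_⟩
  · apply Set.Finite.subset (Set.finite_Icc ((0 : ℕ), (0 : ℕ)) (n₀, n₀))
    intro p hp
    simp only [Set.mem_setOf_eq] at hp
    have : ¬ n₀ ≤ p.1 + p.2 + 3 := by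
      intro hle
      exact hp (by rw [hmain p.1 p.2 hle]; ring)
    constructor <;> constructor <;> simp <;> omega
  · intro i j; ring
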